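/- If a finite connected simple graph G has minimum degree at least 2 and its number of edges equals its number of vertices minus 1 is false (i.e., G is not a tree), and G is outerplanar with no two adjacent vertices of degree 2, no vertex of degree ≤ 1, then G contains a vertex u of degree 2 whose neighbors are adjacent or whose removal disconnects G. -/

import Mathlib

/-- An incidence of `G` is a pair `(v, vw)` with `G.Adj v w`, encoded as the ordered pair
`(v, w)`.  Two incidences `(v, vw)` and `(v', v'w')` are adjacent if `v = v'`, `w = v'`
or `v = w'`.  A `(k, l)`-incidence coloring is a proper coloring of the incidences with at
most `k` colors such that for every vertex `v` at most `l` colors appear on the incoming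
incidences `(u, uv)`. -/
def IsIncColoring {V : Type*} (G : SimpleGraph V) (k l : ℕ) (c : V → V → Fin k) : Prop :=
  (∀ v w v' w' : V, G.Adj v w → G.Adj v' w' → (v, w) ≠ (v', w') →
      (v = v' ∨ w = v' ∨ v = w') → c v w ≠ c v' w') ∧
  (∀ v : V, {x : Fin k | ∃ u, G.Adj u v ∧ c u v = x}.ncard ≤ l)

/-- `G` has a `(k, l)`-incidence coloring. -/
def HasIncColoring {V : Type*} (G : SimpleGraph V) (k l : ℕ) : Prop :=
  ∃ c : V → V → Fin k, IsIncColoring G k l c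

/-- A graph is outerplanar iff it has a one-page book embedding: the vertices can be placed
(injectively) on a line so that no two edges interleave. -/
def Outerplanar {V : Type*} (G : SimpleGraph V) : Prop :=
  ∃ f : V → ℝ, Function.Injective f ∧
    ∀ a b c d : V, G.Adj a b → G.Adj c d →
      ¬(f a < f c ∧ f c < f b ∧ f b < f d)

/-! Place the vertices on a line by a book embedding and take an innermost edge `ab`: one that
spans some vertex, while no other edge drawn inside `[a, b]` spans anything. Neighbours of vertices
strictly between `a` and `b` stay in `[a, b]`, and such a vertex has at most one neighbour to its
right. Hence the leftmost vertex `c` inside `ab` is adjacent exactly to `a` and to one vertex `w`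
on its right, so it has degree 2. If `w = b`, then `c a b` is a triangle; otherwise `w` lies
inside `ab` and its neighbours are `c`, possibly `a`, and at most one vertex on its right. As `w`
cannot have degree 2, it is adjacent to `a`, and `c a w` is a triangle. -/

open Set

namespace SimpleGraph

variable {V : Type*} {G : SimpleGraph V}

section Degree

variable {v x : V} {P : V → Prop} [Fintype (G.neighborSet v)]

lemma card_filter_neighborFinset_le_one [DecidablePred P]
    (huniq : ∀ w w', G.Adj v w → G.Adj v w' → P w → P w' → w = w') :
    ((G.neighborFinset v).filter P).card ≤ 1 :=
  Finset.card_le_one.mpr fun w hw w' hw' => by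
    simp only [Finset.mem_filter, mem_neighborFinset] at hw hw'
    exact huniq w w' hw.1 hw'.1 hw.2 hw'.2

lemma degree_le_two_of_forall_adj (hP : ∀ w, G.Adj v w → w = x ∨ P w)
    (huniq : ∀ w w', G.Adj v w → G.Adj v w' → P w → P w' → w = w') : G.degree v ≤ 2 := by
  classical
  have hsub : G.neighborFinset v ⊆ insert x ((G.neighborFinset v).filter P) := fun w hw => by
    rcases hP w ((G.mem_neighborFinset v w).mp hw) with rfl | h
    · exact Finset.mem_insert_self _ _
    · exact Finset.mem_insert_of_mem (Finset.mem_filter.mpr ⟨hw, h⟩)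
  calc G.degree v = (G.neighborFinset v).card := (card_neighborFinset_eq_degree G v).symm
    _ ≤ _ := Finset.card_le_card hsub
    _ ≤ _ := Finset.card_insert_le _ _
    _ ≤ 2 := by have := card_filter_neighborFinset_le_one huniq; omega

lemma adj_and_exists_of_two_le_degree (hP : ∀ w, G.Adj v w → w = x ∨ P w)
    (huniq : ∀ w w', G.Adj v w → G.Adj v w' → P w → P w' → w = w') (h2 : 2 ≤ G.degree v) :
    G.Adj v x ∧ ∃ w, G.Adj v w ∧ P w := by
  classical
  rw [← card_neighborFinset_eq_degree] at h2
  constructor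
  · by_contra hx
    have hsub : G.neighborFinset v ⊆ (G.neighborFinset v).filter P := fun w hw => by
      have hvw := (G.mem_neighborFinset v w).mp hw
      refine Finset.mem_filter.mpr ⟨hw, (hP w hvw).resolve_left ?_⟩
      rintro rfl
      exact hx hvw
    have := (Finset.card_le_card hsub).trans (card_filter_neighborFinset_le_one huniq)
    omega
  · by_contra! hnone
    have : (G.neighborFinset v).card ≤ 1 := Finset.card_le_one.mpr fun w hw w' hw' => by
      rw [mem_neighborFinset] at hw hw'
      rw [(hP w hw).resolve_right (hnone w hw), (hP w' hw').resolve_right (hnone w' hw')]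
    omega

end Degree

/-- `Outerplanar G` unfolds to `∃ f, G.IsBookEmbedding f`. -/
def IsBookEmbedding (G : SimpleGraph V) (f : V → ℝ) : Prop :=
  Function.Injective f ∧
    ∀ a b c d : V, G.Adj a b → G.Adj c d → ¬(f a < f c ∧ f c < f b ∧ f b < f d)

def IsInnermostEdge (G : SimpleGraph V) (f : V → ℝ) (a b : V) : Prop :=
  G.Adj a b ∧ (∃ c, f c ∈ Ioo (f a) (f b)) ∧
    ∀ x y, G.Adj x y → f a ≤ f x → f y ≤ f b → (f a < f x ∨ f y < f b) →
      ∀ w, f w ∉ Ioo (f x) (f y)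

variable {f : V → ℝ} {a b p w w' : V}

lemma exists_adj_mem_Ioo [Fintype V] [Nonempty V] [DecidableRel G.Adj]
    (hf : Function.Injective f) (hmin : ∀ v, 2 ≤ G.degree v) :
    ∃ a b c, G.Adj a b ∧ f c ∈ Ioo (f a) (f b) := by
  obtain ⟨t, ht⟩ := Finite.exists_max f
  obtain ⟨u, hu, v, hv, huv⟩ :=
    Finset.one_lt_card.mp ((card_neighborFinset_eq_degree G t).symm ▸ hmin t)
  rw [mem_neighborFinset] at hu hv
  have below {x} (hx : G.Adj t x) : f x < f t :=
    (ht x).lt_of_ne fun h => G.ne_of_adj hx (hf h).symm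
  rcases (hf.ne huv).lt_or_gt with h | h
  · exact ⟨u, t, v, hu.symm, h, below hv⟩
  · exact ⟨v, t, u, hv.symm, h, below hu⟩

lemma exists_isInnermostEdge [Finite V] (h : ∃ a b c, G.Adj a b ∧ f c ∈ Ioo (f a) (f b)) :
    ∃ a b, G.IsInnermostEdge f a b := by
  obtain ⟨⟨a, b⟩, ⟨hab, hspan⟩, hmin⟩ :=
    Set.exists_min_image {e : V × V | G.Adj e.1 e.2 ∧ ∃ c, f c ∈ Ioo (f e.1) (f e.2)}
      (fun e => f e.2 - f e.1) (Set.toFinite _)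
      (by obtain ⟨a, b, c, hab, hc⟩ := h; exact ⟨(a, b), hab, c, hc⟩)
  refine ⟨a, b, hab, hspan, fun x y hxy hax hyb hstrict w hw => ?_⟩
  have := hmin (x, y) ⟨hxy, w, hw⟩
  dsimp only at this
  rcases hstrict with h | h <;> linarith

namespace IsBookEmbedding

lemma mem_Icc_of_adj (hf : G.IsBookEmbedding f) (hab : G.Adj a b) (hp : f p ∈ Ioo (f a) (f b))
    (hpw : G.Adj p w) : f w ∈ Icc (f a) (f b) :=
  ⟨le_of_not_gt fun h => hf.2 w p a b hpw.symm hab ⟨h, hp.1, hp.2⟩,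
    le_of_not_gt fun h => hf.2 a b p w hab hpw ⟨hp.1, hp.2, h⟩⟩

lemma eq_or_mem_Ioo_of_adj_of_lt (hf : G.IsBookEmbedding f) (hab : G.Adj a b)
    (hp : f p ∈ Ioo (f a) (f b)) (hpw : G.Adj p w) (hwp : f w < f p) :
    w = a ∨ f w ∈ Ioo (f a) (f b) := by
  obtain ⟨haw, -⟩ := hf.mem_Icc_of_adj hab hp hpw
  rcases haw.eq_or_lt with h | h
  · exact Or.inl (hf.1 h).symm
  · exact Or.inr ⟨h, hwp.trans hp.2⟩

end IsBookEmbedding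

namespace IsInnermostEdge

lemma notMem_Ioo_of_adj (hf : G.IsBookEmbedding f) (hab : G.IsInnermostEdge f a b)
    (hp : f p ∈ Ioo (f a) (f b)) (hpw : G.Adj p w) (x : V) :
    f x ∉ Ioo (f p) (f w) :=
  hab.2.2 p w hpw hp.1.le (hf.mem_Icc_of_adj hab.1 hp hpw).2 (Or.inl hp.1) x

lemma eq_of_adj_of_lt (hf : G.IsBookEmbedding f) (hab : G.IsInnermostEdge f a b)
    (hp : f p ∈ Ioo (f a) (f b)) (hpw : G.Adj p w) (hpw' : G.Adj p w') (hlt : f p < f w)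
    (hlt' : f p < f w') : w = w' := by
  rcases lt_trichotomy (f w) (f w') with h | h | h
  · exact (hab.notMem_Ioo_of_adj hf hp hpw' w ⟨hlt, h⟩).elim
  · exact hf.1 h
  · exact (hab.notMem_Ioo_of_adj hf hp hpw w' ⟨hlt', h⟩).elim

theorem exists_triangle_of_two_le_degree [Fintype V] [DecidableRel G.Adj]
    (hf : G.IsBookEmbedding f) (hab : G.IsInnermostEdge f a b) (hmin : ∀ v, 2 ≤ G.degree v)
    (hno22 : ∀ u v, G.Adj u v → ¬(G.degree u = 2 ∧ G.degree v = 2)) :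
    ∃ u v w, G.degree u = 2 ∧ v ≠ w ∧ G.Adj u v ∧ G.Adj u w ∧ G.Adj v w := by
  obtain ⟨c, hc, hcmin⟩ :=
    Set.exists_min_image {x | f x ∈ Ioo (f a) (f b)} f (Set.toFinite _) hab.2.1
  have hNc (w) (hw : G.Adj c w) : w = a ∨ f c < f w := by
    refine (lt_or_gt_of_ne fun h => G.ne_of_adj hw (hf.1 h).symm).imp (fun h => ?_) id
    exact (hf.eq_or_mem_Ioo_of_adj_of_lt hab.1 hc hw h).resolve_right fun hw' =>
      (hcmin w hw').not_gt h
  have hc_uniq : ∀ w w', G.Adj c w → G.Adj c w' → f c < f w → f c < f w' → w = w' :=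
    fun _ _ => hab.eq_of_adj_of_lt hf hc
  have hc2 : G.degree c = 2 := (degree_le_two_of_forall_adj hNc hc_uniq).antisymm (hmin c)
  obtain ⟨hca, w, hcw, hcw'⟩ := adj_and_exists_of_two_le_degree hNc hc_uniq (hmin c)
  have haw : a ≠ w := by rintro rfl; exact (hc.1.trans hcw').false
  refine ⟨c, a, w, hc2, haw, hca, hcw, ?_⟩
  rcases (hf.mem_Icc_of_adj hab.1 hc hcw).2.eq_or_lt with hwb | hwb
  · rw [hf.1 hwb]
    exact hab.1
  have hw : f w ∈ Ioo (f a) (f b) := ⟨hc.1.trans hcw', hwb⟩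
  by_contra hnaw
  have hNw (x) (hx : G.Adj w x) : x = c ∨ f w < f x := by
    refine (lt_or_gt_of_ne fun h => G.ne_of_adj hx (hf.1 h).symm).imp (fun hxw => ?_) id
    rcases hf.eq_or_mem_Ioo_of_adj_of_lt hab.1 hw hx hxw with rfl | hx'
    · exact (hnaw hx.symm).elim
    rcases (hcmin x hx').eq_or_lt with h | h
    · exact (hf.1 h).symm
    · exact (hab.notMem_Ioo_of_adj hf hc hcw x ⟨h, hxw⟩).elim
  have hw2 := (degree_le_two_of_forall_adj hNw fun _ _ => hab.eq_of_adj_of_lt hf hw).antisymm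
    (hmin w)
  exact hno22 c w hcw ⟨hc2, hw2⟩

end IsInnermostEdge

end SimpleGraph

theorem stmt_16_general {V : Type*} [Fintype V] (G : SimpleGraph V)
    [DecidableRel G.Adj] (hconn : G.Connected)
    (hmin : ∀ v, 2 ≤ G.degree v)
    (hout : Outerplanar G)
    (hno22 : ∀ u v, G.Adj u v → ¬(G.degree u = 2 ∧ G.degree v = 2)) :
    ∃ u, G.degree u = 2 ∧
      ((∃ v w, v ≠ w ∧ G.Adj u v ∧ G.Adj u w ∧ G.Adj v w) ∨
        ¬(G.induce {x | x ≠ u}).Connected) := by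
  obtain ⟨f, hf⟩ := hout
  have := hconn.nonempty
  obtain ⟨a, b, hab⟩ :=
    SimpleGraph.exists_isInnermostEdge (SimpleGraph.exists_adj_mem_Ioo hf.1 hmin)
  obtain ⟨u, v, w, hu, hvw, huv, huw, hvw'⟩ :=
    hab.exists_triangle_of_two_le_degree hf hmin hno22
  exact ⟨u, hu, Or.inl ⟨v, w, hvw, huv, huw, hvw'⟩⟩

/-- A connected outerplanar graph with minimum degree at least 2 that is not a tree and
has no two adjacent vertices of degree 2 contains a degree-2 vertex whose neighbors are
adjacent or whose removal disconnects the graph. -/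
theorem stmt_16 {V : Type*} [Fintype V] [DecidableEq V] (G : SimpleGraph V)
    [DecidableRel G.Adj] (hconn : G.Connected)
    (hmin : ∀ v, 2 ≤ G.degree v) (hnotree : G.edgeFinset.card ≠ Fintype.card V - 1)
    (hout : Outerplanar G) (hnodeg1 : ∀ v, ¬ G.degree v ≤ 1)
    (hno22 : ∀ u v, G.Adj u v → ¬(G.degree u = 2 ∧ G.degree v = 2)) :
    ∃ u, G.degree u = 2 ∧
      ((∃ v w, v ≠ w ∧ G.Adj u v ∧ G.Adj u w ∧ G.Adj v w) ∨
        ¬(G.induce {x | x ≠ u}).Connected) :=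
  stmt_16_general G hconn hmin hout hno22
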